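/- (Logit-gap invariant along exact DPO-Mix-P.) Suppose θ^(0) = 0 and the parameters evolve by the exact DPO-Mix-P update with learning rate η = 1/(β²A): θ^(t+1)_a = θ^(t)_a + (1/(βA)) Σ_{a'∈𝒴} Δ(a,a';θ^(t)) / σ'(β(θ^(t)_a − θ^(t)_{a'})) for every a ∈ 𝒴. Then for every t ∈ ℕ and all a, a' ∈ 𝒴, |β(θ^(t)_a − θ^(t)_{a'})| ≤ 1.388, and consequently σ'(β(θ^(t)_a − θ^(t)_{a'})) > 0.159. -/

import Mathlib

/-- The sigmoid function. -/
noncomputable def sig (x : ℝ) : ℝ := 1 / (1 + Real.exp (-x))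

/-- The derivative of the sigmoid function. -/
noncomputable def sig' (x : ℝ) : ℝ := sig x * (1 - sig x)

/-!
In the scaled logits `x = βθ` the update replaces each gap error
`u_{ab} = (x_a - x_b) - (r_a - r_b)` by an average over `b` of differences of Newton residuals
`u + (σ(d) - σ(d + u)) / σ'(d + u)` with `d = r_a - r_b`: each summand is one Newton step for
`σ(g) = σ(d)` from `g = d + u`. Newton's method squares the error, with constant controlled by
`sup |σ''| ≤ 1/4` and `σ' > 0.159` on `[-1.3, 1.3]`, so `|u| ≤ 0.3` gives residuals of size at most
`0.15` and the bound `|u| ≤ 0.3` is invariant. The first step from `θ = 0` is not covered by this,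
since there `u = -d` may be as large as `1`; instead its residual `4σ(d) - d - 2` varies with `d`
at rate `|4σ' - 1| ≤ 0.22` on `[-1, 1]`. Hence every gap `d + u` is at most `1.3` in absolute value.
-/

open Real Finset

lemma sig_eq_sigmoid : sig = sigmoid := by
  funext x
  simp [sig, sigmoid_def]

lemma sig'_eq_sigmoid (x : ℝ) : sig' x = sigmoid x * (1 - sigmoid x) := by
  rw [sig', sig_eq_sigmoid]

lemma hasDerivAt_sig (x : ℝ) : HasDerivAt sig (sig' x) x := by
  rw [sig_eq_sigmoid, sig'_eq_sigmoid]
  exact hasDerivAt_sigmoid x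

lemma hasDerivAt_sig' (x : ℝ) : HasDerivAt sig' (sig' x * (1 - 2 * sig x)) x := by
  rw [show sig' x * (1 - 2 * sig x) = sig' x * (1 - sig x) + sig x * -sig' x by ring]
  exact (hasDerivAt_sig x).mul ((hasDerivAt_sig x).const_sub 1)

lemma sig_zero : sig 0 = 1 / 2 := by
  simp [sig_eq_sigmoid, sigmoid_zero]

lemma sig'_zero : sig' 0 = 1 / 4 := by
  rw [sig', sig_zero]
  norm_num

lemma sig'_eq_inv_cosh (x : ℝ) : sig' x = (2 + 2 * cosh x)⁻¹ := by
  have hx : exp x * exp (-x) = 1 := by rw [← exp_add, add_neg_cancel, exp_zero]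
  rw [sig'_eq_sigmoid, sigmoid_def, cosh_eq]
  field_simp
  linear_combination hx

lemma sig'_pos (x : ℝ) : 0 < sig' x := by
  rw [sig'_eq_inv_cosh]
  positivity

lemma sig'_le_quarter (x : ℝ) : sig' x ≤ 1 / 4 := by
  rw [sig'_eq_inv_cosh, one_div]
  gcongr
  linarith [one_le_cosh x]

lemma sig'_le_sig' {x y : ℝ} : sig' x ≤ sig' y ↔ |y| ≤ |x| := by
  rw [sig'_eq_inv_cosh, sig'_eq_inv_cosh, inv_le_inv₀ (by positivity) (by positivity), ← cosh_le_cosh]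
  constructor <;> intro h <;> linarith

lemma sig'_ge_of_abs_le_one {x : ℝ} (hx : |x| ≤ 1) : 0.195 ≤ sig' x := by
  refine le_trans ?_ (sig'_le_sig'.2 (hx.trans_eq abs_one.symm))
  have h : exp 1 * exp (-1) = 1 := by rw [← exp_add, add_neg_cancel, exp_zero]
  rw [sig'_eq_inv_cosh, cosh_eq, le_inv_comm₀ (by norm_num) (by positivity)]
  nlinarith [exp_one_gt_d9, exp_neg_one_gt_d9]

lemma sig'_gt_of_abs_le {x : ℝ} (hx : |x| ≤ 1.3) : 0.159 < sig' x := by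
  refine lt_of_lt_of_le ?_ (sig'_le_sig'.2 (hx.trans_eq (abs_of_pos (by norm_num)).symm))
  have h : exp 1.3 * exp (-1.3) = 1 := by rw [← exp_add, add_neg_cancel, exp_zero]
  have hlow : 0.2574 < exp (-1.3) := by
    have h07 : 0.7 ≤ exp (-0.3) := by linarith [add_one_le_exp (-0.3 : ℝ)]
    rw [show (-1.3 : ℝ) = -1 + -0.3 by norm_num, exp_add]
    nlinarith [exp_neg_one_gt_d9]
  have hup : exp (-1.3) < 1 := exp_lt_one_iff.2 (by norm_num)
  rw [sig'_eq_inv_cosh, cosh_eq, lt_inv_comm₀ (by norm_num) (by positivity)]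
  nlinarith

lemma abs_sub_le_of_hasDerivAt_of_abs_le {f f' : ℝ → ℝ} {C x y : ℝ}
    (hf : ∀ z, HasDerivAt f (f' z) z) (hC : ∀ z ∈ Set.uIcc x y, |f' z| ≤ C) :
    |f y - f x| ≤ C * |y - x| :=
  (convex_uIcc x y).norm_image_sub_le_of_norm_hasDerivWithin_le
    (fun z _ => (hf z).hasDerivWithinAt) hC Set.left_mem_uIcc Set.right_mem_uIcc

lemma abs_sub_sub_mul_le_of_abs_deriv_sub_le {f f' : ℝ → ℝ} {L : ℝ}
    (hf : ∀ z, HasDerivAt f (f' z) z) (hL : ∀ y z, |f' y - f' z| ≤ L * |y - z|) (x y : ℝ) :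
    |f y - f x - f' x * (y - x)| ≤ L * (y - x) ^ 2 := by
  have hL0 : 0 ≤ L := by simpa using (abs_nonneg _).trans (hL 1 0)
  have h := abs_sub_le_of_hasDerivAt_of_abs_le (x := x) (y := y) (C := L * |y - x|)
    (f := fun z => f z - f' x * z) (f' := fun z => f' z - f' x)
    (fun z => by simpa using (hf z).fun_sub ((hasDerivAt_id' z).const_mul (f' x)))
    (fun z hz => (hL z x).trans (mul_le_mul_of_nonneg_left (Set.abs_sub_left_of_mem_uIcc hz) hL0))
  rw [← sq_abs, sq, ← mul_assoc]
  convert h using 2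
  ring

lemma abs_sig'_sub_le (y z : ℝ) : |sig' y - sig' z| ≤ 1 / 4 * |y - z| :=
  abs_sub_le_of_hasDerivAt_of_abs_le hasDerivAt_sig' fun w _ => by
    rw [abs_mul, abs_of_pos (sig'_pos w)]
    have : |1 - 2 * sig w| ≤ 1 := by
      rw [sig_eq_sigmoid, abs_le]
      constructor <;> linarith [sigmoid_pos w, sigmoid_lt_one w]
    nlinarith [sig'_le_quarter w, sig'_pos w, abs_nonneg (1 - 2 * sig w)]

lemma abs_sig_sub_sub_le (x y : ℝ) : |sig y - sig x - sig' x * (y - x)| ≤ 1 / 4 * (y - x) ^ 2 :=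
  abs_sub_sub_mul_le_of_abs_deriv_sub_le hasDerivAt_sig abs_sig'_sub_le x y

/-- Error left after one Newton step for `sig g = sig d`, started at `g = d + u`. -/
noncomputable def newtonResidual (d u : ℝ) : ℝ :=
  u + (sig d - sig (d + u)) / sig' (d + u)

lemma abs_newtonResidual_le {d u : ℝ} (hd : |d| ≤ 1) (hu : |u| ≤ 0.3) :
    |newtonResidual d u| ≤ 0.15 := by
  have hσ' : 0.159 < sig' (d + u) :=
    sig'_gt_of_abs_le ((abs_add_le d u).trans (by linarith))
  have htaylor := abs_sig_sub_sub_le (d + u) d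
  rw [show d - (d + u) = -u by ring, neg_sq, ← sq_abs] at htaylor
  have hres : newtonResidual d u = (sig d - sig (d + u) - sig' (d + u) * -u) / sig' (d + u) := by
    rw [newtonResidual]
    field_simp
    ring
  rw [hres, abs_div, abs_of_pos (a := sig' (d + u)) (by linarith), div_le_iff₀ (by linarith)]
  nlinarith [abs_nonneg u]

lemma newtonResidual_neg_self (p : ℝ) : newtonResidual p (-p) = 4 * sig p - p - 2 := by
  rw [newtonResidual, add_neg_cancel, sig_zero, sig'_zero]
  ring

lemma abs_newtonResidual_neg_self_sub_le {p q : ℝ} (hp : |p| ≤ 1) (hq : |q| ≤ 1)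
    (hpq : |p - q| ≤ 1) :
    |newtonResidual p (-p) - newtonResidual q (-q)| ≤ 0.22 := by
  have hlip : |(4 * sig p - p) - (4 * sig q - q)| ≤ 0.22 * |p - q| := by
    refine abs_sub_le_of_hasDerivAt_of_abs_le (f' := fun z => 4 * sig' z - 1)
      (fun z => by simpa using ((hasDerivAt_sig z).const_mul 4).fun_sub (hasDerivAt_id' z))
      fun z hz => ?_
    have hlow : 0.195 ≤ sig' z :=
      sig'_ge_of_abs_le_one (abs_le.2 (Set.uIcc_subset_Icc (abs_le.1 hq) (abs_le.1 hp) hz))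
    rw [abs_le]
    constructor <;> linarith [sig'_le_quarter z]
  calc |newtonResidual p (-p) - newtonResidual q (-q)|
      = |(4 * sig p - p) - (4 * sig q - q)| := by
        rw [newtonResidual_neg_self, newtonResidual_neg_self]
        ring_nf
    _ ≤ 0.22 * |p - q| := hlip
    _ ≤ 0.22 := by linarith

section MixP

open scoped BigOperators

variable {Y : Type*} [Fintype Y]

/-- The exact DPO-Mix-P update written for the scaled logits `x = β θ`. -/
noncomputable def mixPStep (r x : Y → ℝ) (a : Y) : ℝ :=
  x a + 𝔼 b, (sig (r a - r b) - sig (x a - x b)) / sig' (x a - x b)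

def gapError (r x : Y → ℝ) (a b : Y) : ℝ := x a - x b - (r a - r b)

lemma gapError_mixPStep (r x : Y → ℝ) (a a' : Y) :
    gapError r (mixPStep r x) a a' =
      𝔼 b, (newtonResidual (r a - r b) (gapError r x a b) -
        newtonResidual (r a' - r b) (gapError r x a' b)) := by
  have : Nonempty Y := ⟨a⟩
  set Φ : Y → Y → ℝ := fun c b => (sig (r c - r b) - sig (x c - x b)) / sig' (x c - x b) with hΦ
  have hres : ∀ b, newtonResidual (r a - r b) (gapError r x a b) -
      newtonResidual (r a' - r b) (gapError r x a' b) = gapError r x a a' + (Φ a b - Φ a' b) := by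
    intro b
    simp only [newtonResidual, gapError, hΦ, add_sub_cancel]
    ring
  simp only [hres, expect_add_distrib, Fintype.expect_const, expect_sub_distrib]
  simp only [gapError, mixPStep, hΦ]
  ring

lemma abs_gapError_mixPStep_le_of_forall {r x : Y → ℝ} {c : ℝ} (a a' : Y)
    (h : ∀ b, |newtonResidual (r a - r b) (gapError r x a b) -
      newtonResidual (r a' - r b) (gapError r x a' b)| ≤ c) :
    |gapError r (mixPStep r x) a a'| ≤ c := by
  have : Nonempty Y := ⟨a⟩
  rw [gapError_mixPStep]
  exact (abs_expect_le _ _).trans (expect_le univ_nonempty fun b _ => h b)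

lemma abs_gapError_mixPStep_zero_le {r : Y → ℝ} (hr : ∀ a b, |r a - r b| ≤ 1) (a a' : Y) :
    |gapError r (mixPStep r 0) a a'| ≤ 0.3 := by
  refine abs_gapError_mixPStep_le_of_forall a a' fun b => ?_
  have hzero : ∀ c, gapError r 0 c b = -(r c - r b) := fun c => by simp [gapError]
  rw [hzero, hzero]
  refine (abs_newtonResidual_neg_self_sub_le (hr a b) (hr a' b) ?_).trans (by norm_num)
  simpa using hr a a'

lemma abs_gapError_mixPStep_le {r x : Y → ℝ} (hr : ∀ a b, |r a - r b| ≤ 1)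
    (hx : ∀ a b, |gapError r x a b| ≤ 0.3) (a a' : Y) :
    |gapError r (mixPStep r x) a a'| ≤ 0.3 :=
  abs_gapError_mixPStep_le_of_forall a a' fun b =>
    (abs_sub _ _).trans <| by
      linarith [abs_newtonResidual_le (hr a b) (hx a b), abs_newtonResidual_le (hr a' b) (hx a' b)]

end MixP

theorem dpo_mix_p_logit_gap_invariant_general
    {Y : Type*} [Fintype Y]
    (A : ℕ) (hA : A = Fintype.card Y)
    (r : Y → ℝ) (hr : ∀ a, 0 ≤ r a ∧ r a ≤ 1)
    (β : ℝ) (hβ : 0 < β)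
    (θ : ℕ → Y → ℝ) (hθ0 : θ 0 = 0)
    (hupd : ∀ t a, θ (t + 1) a = θ t a +
      (1 / (β * A)) * ∑ a' : Y,
        (sig (r a - r a') - sig (β * (θ t a - θ t a'))) /
          sig' (β * (θ t a - θ t a'))) :
    ∀ (t : ℕ) (a a' : Y),
      |β * (θ t a - θ t a')| ≤ 1.388 ∧
      0.159 < sig' (β * (θ t a - θ t a')) := by
  have hr' : ∀ a b, |r a - r b| ≤ 1 := fun a b => abs_sub_le_iff.2
    ⟨by linarith [hr a, hr b], by linarith [hr a, hr b]⟩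
  set x : ℕ → Y → ℝ := fun t a => β * θ t a with hx
  have hstep : ∀ t, x (t + 1) = mixPStep r (x t) := by
    intro t
    funext a
    simp only [hx, hupd, mixPStep, Fintype.expect_eq_sum_div_card, ← hA]
    field_simp
  have herr : ∀ t a a', |gapError r (x (t + 1)) a a'| ≤ 0.3 := by
    intro t
    induction t with
    | zero =>
      rw [hstep, show x 0 = 0 by funext; simp [hx, hθ0]]
      exact abs_gapError_mixPStep_zero_le hr'
    | succ t ih => rw [hstep]; exact abs_gapError_mixPStep_le hr' ih
  have hgap : ∀ t a a', |β * (θ t a - θ t a')| ≤ 1.3 := by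
    rintro (_ | t) a a'
    · norm_num [hθ0]
    · calc |β * (θ (t + 1) a - θ (t + 1) a')|
          = |(r a - r a') + gapError r (x (t + 1)) a a'| := by simp only [gapError, hx]; ring_nf
        _ ≤ 1.3 := (abs_add_le _ _).trans (by linarith [hr' a a', herr t a a'])
  exact fun t a a' => ⟨(hgap t a a').trans (by norm_num),
    sig'_gt_of_abs_le (hgap t a a')⟩

/-- **Logit-gap invariant along exact DPO-Mix-P.**
Along the exact DPO-Mix-P iteration with learning rate `η = 1/(β²A)` started
from `θ⁰ = 0`, every logit gap satisfies `|β(θ^t_a - θ^t_{a'})| ≤ 1.388`,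
and consequently `σ'(β(θ^t_a - θ^t_{a'})) > 0.159`. -/
theorem dpo_mix_p_logit_gap_invariant
    {Y : Type*} [Fintype Y] [Nonempty Y]
    (A : ℕ) (hA : A = Fintype.card Y)
    (r : Y → ℝ) (hr : ∀ a, 0 ≤ r a ∧ r a ≤ 1)
    (β : ℝ) (hβ : 0 < β)
    (θ : ℕ → Y → ℝ) (hθ0 : θ 0 = 0)
    (hupd : ∀ t a, θ (t + 1) a = θ t a +
      (1 / (β * A)) * ∑ a' : Y,
        (sig (r a - r a') - sig (β * (θ t a - θ t a'))) /
          sig' (β * (θ t a - θ t a'))) :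
    ∀ (t : ℕ) (a a' : Y),
      |β * (θ t a - θ t a')| ≤ 1.388 ∧
      0.159 < sig' (β * (θ t a - θ t a')) :=
  dpo_mix_p_logit_gap_invariant_general A hA r hr β hβ θ hθ0 hupd
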